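/- Let (γ_k)_{k=0}^∞ be a Legendre multiplier sequence. Then the terms satisfy Turán's inequality: γ_k² − γ_{k−1}·γ_{k+1} ≥ 0 for all k ≥ 1. -/

import Mathlib

open Polynomial

/-- A real polynomial is *hyperbolic* if all of its complex roots are real
(the zero polynomial and nonzero constants are vacuously hyperbolic). -/
def Hyperbolic (p : Polynomial ℝ) : Prop :=
  ∀ z ∈ (p.map (algebraMap ℝ ℂ)).roots, z.im = 0

/-- `γ` is a multiplier sequence for the simple set `q`: the linear operator
sending `q k` to `γ k • q k` maps hyperbolic polynomials to hyperbolic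
polynomials.  (Since `q` is a simple set, every real polynomial has a unique
expansion `∑ a k • q k`, so this quantification over coefficient families
expresses exactly that property.) -/
def IsMultiplierSeqFor (q : ℕ → Polynomial ℝ) (γ : ℕ → ℝ) : Prop :=
  ∀ (n : ℕ) (a : ℕ → ℝ),
    Hyperbolic (∑ k ∈ Finset.range n, C (a k) * q k) →
    Hyperbolic (∑ k ∈ Finset.range n, C (γ k * a k) * q k)

/-- The Legendre polynomials, via Rodrigues' formula
`Le n = (1/(2^n n!)) Dⁿ[(x²-1)ⁿ]`. -/
noncomputable def legendre (n : ℕ) : Polynomial ℝ :=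
  C (1 / (2 ^ n * n.factorial : ℝ)) * derivative^[n] ((X ^ 2 - 1) ^ n)

/-- A Legendre multiplier sequence. -/
def IsLegendreMS (γ : ℕ → ℝ) : Prop := IsMultiplierSeqFor legendre γ

/-!
The multiplier operator `T` is upper triangular in the monomial basis with diagonal `γ`, because
the Legendre polynomials are a triangular basis. Hence for `d = k + 1` the top three coefficients
of `T[(x - r)ᵈ]`, which is hyperbolic, are `γ_d`, `-d γ_{d-1} r + O(1)` and
`C(d,2) γ_{d-2} r² + O(r)`. Newton's inequality for hyperbolic polynomials (the discriminant of
the `(d-2)`-nd derivative, hyperbolic by Rolle) then makes a quadratic in `r` nonnegative for all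
`r`; its leading coefficient is `k (k+1)² (γₖ² - γₖ₋₁ γₖ₊₁)`.
-/

theorem Polynomial.Splits.derivative {p : ℝ[X]} (hp : p.Splits) :
    (Polynomial.derivative p).Splits := by
  rw [splits_iff_card_roots] at hp ⊢
  have := card_roots_le_derivative p
  have := natDegree_derivative_le p
  have := card_roots' (Polynomial.derivative p)
  omega

theorem Polynomial.Splits.iterate_derivative {p : ℝ[X]} (hp : p.Splits) (k : ℕ) :
    (Polynomial.derivative^[k] p).Splits := by
  induction k with
  | zero => exact hp
  | succ k ih => rw [Function.iterate_succ_apply']; exact ih.derivative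

theorem Polynomial.Splits.discrim_coeff_nonneg {q : ℝ[X]} (hq : q.Splits)
    (hdeg : q.natDegree ≤ 2) :
    0 ≤ discrim (q.coeff 2) (q.coeff 1) (q.coeff 0) := by
  by_cases h2 : q.coeff 2 = 0
  · rw [discrim, h2]; nlinarith [sq_nonneg (q.coeff 1)]
  obtain ⟨x, hx⟩ := Multiset.exists_mem_of_ne_zero <|
    hq.roots_ne_zero (by have := le_natDegree_of_ne_zero h2; omega)
  have hroot : q.coeff 2 * (x * x) + q.coeff 1 * x + q.coeff 0 = 0 := by
    rw [← (isRoot_of_mem_roots hx).eq_zero, eval_eq_sum_range' (by omega : q.natDegree < 3)]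
    simp only [Finset.sum_range_succ, Finset.sum_range_zero]
    ring
  rw [discrim_eq_sq_of_quadratic_eq_zero hroot]
  positivity

theorem Polynomial.Splits.newton_top_coeffs {p : ℝ[X]} (hp : p.Splits) (n : ℕ)
    (hdeg : p.natDegree ≤ n + 2) :
    2 * (n + 2) * (p.coeff (n + 2) * p.coeff n) ≤ (n + 1) * p.coeff (n + 1) ^ 2 := by
  have hdisc := (hp.iterate_derivative n).discrim_coeff_nonneg
    ((natDegree_iterate_derivative p n).trans (by omega))
  simp only [coeff_iterate_derivative, nsmul_eq_mul, discrim, add_zero, add_comm _ n] at hdisc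
  have h1 : (n + 1).descFactorial n = (n + 1).factorial := by
    simpa using Nat.factorial_mul_descFactorial (show n ≤ n + 1 by omega)
  have h2 : 2 * (n + 2).descFactorial n = (n + 2).factorial := by
    simpa using Nat.factorial_mul_descFactorial (show n ≤ n + 2 by omega)
  rw [h1, Nat.descFactorial_self] at hdisc
  have h2R : 2 * ((n + 2).descFactorial n : ℝ) = (n + 2) * (n + 1) * n.factorial := by
    exact_mod_cast h2.trans (by simp [Nat.factorial_succ]; ring)
  push_cast [Nat.factorial_succ] at hdisc
  have hfac : (0 : ℝ) < (n + 1) * n.factorial ^ 2 := by positivity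
  have key : 0 ≤ (n + 1) * n.factorial ^ 2 *
      ((n + 1) * p.coeff (n + 1) ^ 2 - 2 * (n + 2) * (p.coeff (n + 2) * p.coeff n)) := by
    linear_combination hdisc - 2 * p.coeff (n + 2) * n.factorial * p.coeff n * h2R
  linarith [nonneg_of_mul_nonneg_right key hfac]

theorem hyperbolic_iff_splits {p : ℝ[X]} : Hyperbolic p ↔ p.Splits := by
  refine ⟨fun hp => .of_splits_map (algebraMap ℝ ℂ) (IsAlgClosed.splits _) fun z hz =>
    ⟨z.re, Complex.ext rfl (hp z hz).symm⟩, fun hp z hz => ?_⟩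
  rw [hp.roots_map] at hz
  obtain ⟨x, -, rfl⟩ := Multiset.mem_map.mp hz
  exact Complex.ofReal_im x

theorem leading_nonneg_of_forall_quadratic_nonneg {a b c : ℝ}
    (h : ∀ x : ℝ, 0 ≤ a * x ^ 2 + b * x + c) : 0 ≤ a := by
  by_contra! ha
  have hc := h 0
  set x := √((c + 1) / -a)
  have hx : x ^ 2 = (c + 1) / -a := Real.sq_sqrt (div_nonneg (by linarith) (by linarith))
  rw [eq_div_iff (neg_ne_zero.mpr ha.ne)] at hx
  nlinarith [h x, h (-x)]

theorem LinearMap.coeff_apply_eq_sum {R : Type*} [Semiring R] (T : R[X] →ₗ[R] R[X]) {p : R[X]}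
    {n : ℕ} (hp : p.natDegree < n) (t : ℕ) :
    (T p).coeff t = ∑ i ∈ Finset.range n, p.coeff i * (T (X ^ i)).coeff t := by
  conv_lhs => rw [p.as_sum_range' n hp]
  simp only [← C_mul_X_pow_eq_monomial, ← smul_eq_C_mul, map_sum, map_smul, finsetSum_coeff,
    coeff_smul, smul_eq_mul]

namespace Polynomial.Sequence

variable {K : Type*} [Field K] (S : Sequence K)

theorem isUnit_leadingCoeff (i : ℕ) : IsUnit (S i).leadingCoeff :=
  (leadingCoeff_ne_zero.mpr (S.ne_zero i)).isUnit

noncomputable def multiplierOp (γ : ℕ → K) : K[X] →ₗ[K] K[X] :=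
  (S.basis S.isUnit_leadingCoeff).constr K fun i => γ i • S i

variable (γ : ℕ → K)

theorem multiplierOp_apply_self (i : ℕ) : S.multiplierOp γ (S i) = γ i • S i := by
  have := (S.basis S.isUnit_leadingCoeff).constr_basis K (fun i => γ i • S i) i
  rwa [S.basis_eq_self] at this

theorem multiplierOp_sum (n : ℕ) (a : ℕ → K) :
    S.multiplierOp γ (∑ k ∈ Finset.range n, C (a k) * S k) =
      ∑ k ∈ Finset.range n, C (γ k * a k) * S k := by
  rw [map_sum]
  refine Finset.sum_congr rfl fun k _ => ?_
  rw [← smul_eq_C_mul, ← smul_eq_C_mul, map_smul, multiplierOp_apply_self, smul_smul, mul_comm]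

theorem exists_sum_eq (p : K[X]) :
    ∃ (n : ℕ) (a : ℕ → K), ∑ k ∈ Finset.range n, C (a k) * S k = p := by
  set b := S.basis S.isUnit_leadingCoeff
  obtain ⟨n, hn⟩ := Finset.exists_nat_subset_range (b.repr p).support
  refine ⟨n, b.repr p, ?_⟩
  conv_rhs => rw [← b.linearCombination_repr p, Finsupp.linearCombination_apply,
    Finsupp.sum_of_support_subset _ hn _ (by simp)]
  simp [b, smul_eq_C_mul]

theorem multiplierOp_sub_smul_mem_degreeLT {n : ℕ} {p : K[X]} (hp : p ∈ degreeLE K n) :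
    S.multiplierOp γ p - γ n • p ∈ degreeLT K n := by
  rw [← S.span_degreeLE fun i _ => S.isUnit_leadingCoeff i] at hp
  refine (Submodule.span_le (p := (degreeLT K n).comap (S.multiplierOp γ - γ n • LinearMap.id))
    |>.mpr ?_) hp
  rintro _ ⟨i, hi, rfl⟩
  simp only [SetLike.mem_coe, Submodule.mem_comap, LinearMap.sub_apply, LinearMap.smul_apply,
    LinearMap.id_apply, multiplierOp_apply_self, ← sub_smul]
  rcases (Set.mem_Iic.mp hi).lt_or_eq with hi | rfl
  · exact Submodule.smul_mem _ _ (mem_degreeLT.mpr (by simpa using hi))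
  · simp

theorem coeff_multiplierOp_of_natDegree_le {n t : ℕ} {p : K[X]} (hp : p.natDegree ≤ n)
    (ht : n ≤ t) : (S.multiplierOp γ p).coeff t = γ n * p.coeff t := by
  have h := S.multiplierOp_sub_smul_mem_degreeLT γ
    (mem_degreeLE.mpr (natDegree_le_iff_degree_le.mp hp))
  rw [mem_degreeLT] at h
  have := coeff_eq_zero_of_degree_lt (h.trans_le (by exact_mod_cast ht))
  rwa [coeff_sub, coeff_smul, smul_eq_mul, sub_eq_zero] at this

theorem natDegree_multiplierOp_le {n : ℕ} {p : K[X]} (hp : p.natDegree ≤ n) :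
    (S.multiplierOp γ p).natDegree ≤ n :=
  natDegree_le_iff_coeff_eq_zero.mpr fun t ht => by
    rw [S.coeff_multiplierOp_of_natDegree_le γ hp ht.le,
      coeff_eq_zero_of_natDegree_lt (hp.trans_lt ht), mul_zero]

theorem exists_coeff_multiplierOp_X_sub_C_pow (m : ℕ) : ∃ β₁ β₂ β₃ : K, ∀ r : K,
    (S.multiplierOp γ ((X - C r) ^ (m + 2))).coeff (m + 2) = γ (m + 2) ∧
    (S.multiplierOp γ ((X - C r) ^ (m + 2))).coeff (m + 1) = -(m + 2) * γ (m + 1) * r + β₁ ∧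
    (S.multiplierOp γ ((X - C r) ^ (m + 2))).coeff m =
      (m + 2).choose 2 * γ m * r ^ 2 + β₂ * r + β₃ := by
  set u : ℕ → ℕ → K := fun i t => (S.multiplierOp γ (X ^ i)).coeff t
  have hu_lt {i t : ℕ} (h : i < t) : u i t = 0 := by
    simp [u, S.coeff_multiplierOp_of_natDegree_le γ (natDegree_X_pow_le i) h.le, coeff_X_pow,
      h.ne']
  have hu_self (i : ℕ) : u i i = γ i := by
    simp [u, S.coeff_multiplierOp_of_natDegree_le γ (natDegree_X_pow_le i) le_rfl]
  refine ⟨u (m + 2) (m + 1), -(m + 2) * u (m + 1) m, u (m + 2) m, fun r => ?_⟩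
  have hcoeff {t : ℕ} (ht : m ≤ t) : (S.multiplierOp γ ((X - C r) ^ (m + 2))).coeff t =
      ∑ k ∈ Finset.range 3, ((X - C r) ^ (m + 2)).coeff (m + k) * u (m + k) t := by
    rw [LinearMap.coeff_apply_eq_sum _ (n := m + 3)
      (by rw [natDegree_pow, natDegree_X_sub_C]; omega), Finset.sum_range_add,
      Finset.sum_eq_zero fun i hi => mul_eq_zero_of_right _ (hu_lt (by simp at hi; omega)),
      zero_add]
  have hP (k : ℕ) : ((X - C r) ^ (m + 2)).coeff k = (-r) ^ (m + 2 - k) * (m + 2).choose k := by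
    rw [sub_eq_add_neg, ← C_neg, coeff_X_add_C_pow]
  rw [hcoeff (by omega), hcoeff (by omega), hcoeff le_rfl]
  simp only [Finset.sum_range_succ, Finset.sum_range_zero, zero_add, add_zero, hu_self,
    hu_lt (show m < m + 2 by omega), hu_lt (show m + 1 < m + 2 by omega),
    hu_lt (show m < m + 1 by omega), hP, Nat.add_sub_cancel_left, Nat.sub_self,
    show m + 2 - (m + 1) = 1 by omega, Nat.choose_self, Nat.choose_succ_self_right,
    show (m + 2).choose m = (m + 2).choose 2 from Nat.choose_symm_add]
  refine ⟨by ring, by push_cast; ring, by push_cast; ring⟩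

end Polynomial.Sequence

theorem IsMultiplierSeqFor.splits_multiplierOp {S : Sequence ℝ} {γ : ℕ → ℝ}
    (h : IsMultiplierSeqFor S γ) {p : ℝ[X]} (hp : p.Splits) : (S.multiplierOp γ p).Splits := by
  obtain ⟨n, a, rfl⟩ := S.exists_sum_eq p
  rw [S.multiplierOp_sum, ← hyperbolic_iff_splits]
  exact h n a (hyperbolic_iff_splits.mpr hp)

theorem natDegree_X_sq_sub_one_pow (n : ℕ) : ((X ^ 2 - 1 : ℝ[X]) ^ n).natDegree = 2 * n := by
  rw [natDegree_pow, ← C_1, natDegree_X_pow_sub_C, mul_comm]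

theorem natDegree_legendre_le (n : ℕ) : (legendre n).natDegree ≤ n :=
  (natDegree_C_mul_le _ _).trans <| (natDegree_iterate_derivative _ n).trans <| by
    rw [natDegree_X_sq_sub_one_pow]; omega

theorem coeff_legendre_self_ne_zero (n : ℕ) : (legendre n).coeff n ≠ 0 := by
  have hmonic : ((X ^ 2 - 1 : ℝ[X]) ^ n).Monic := by
    rw [← C_1]; exact (monic_X_pow_sub_C 1 two_ne_zero).pow n
  have hlead := hmonic.coeff_natDegree
  rw [natDegree_X_sq_sub_one_pow, two_mul] at hlead
  rw [legendre, coeff_C_mul, coeff_iterate_derivative, hlead, nsmul_eq_mul, mul_one]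
  refine mul_ne_zero (by positivity) (Nat.cast_ne_zero.mpr ?_)
  exact (Nat.descFactorial_pos.mpr (by omega)).ne'

theorem degree_legendre (n : ℕ) : (legendre n).degree = n :=
  degree_eq_of_le_of_coeff_ne_zero (natDegree_le_iff_degree_le.mp (natDegree_legendre_le n))
    (coeff_legendre_self_ne_zero n)

noncomputable def legendreSeq : Sequence ℝ := ⟨legendre, degree_legendre⟩

theorem stmt_3 (γ : ℕ → ℝ) (h : IsLegendreMS γ) :
    ∀ k : ℕ, 1 ≤ k → γ k ^ 2 - γ (k - 1) * γ (k + 1) ≥ 0 := by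
  intro k hk
  obtain ⟨m, rfl⟩ : ∃ m, k = m + 1 := ⟨k - 1, by omega⟩
  rw [Nat.add_sub_cancel]
  obtain ⟨β₁, β₂, β₃, hcoeff⟩ := legendreSeq.exists_coeff_multiplierOp_X_sub_C_pow γ m
  have hquad (r : ℝ) : 0 ≤ (m + 1) * (m + 2) ^ 2 * (γ (m + 1) ^ 2 - γ m * γ (m + 2)) * r ^ 2
      + (-2 * (m + 1) * (m + 2) * γ (m + 1) * β₁ - 2 * (m + 2) * γ (m + 2) * β₂) * r
      + ((m + 1) * β₁ ^ 2 - 2 * (m + 2) * γ (m + 2) * β₃) := by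
    have hsplit := IsMultiplierSeqFor.splits_multiplierOp (S := legendreSeq) h
      ((Splits.X_sub_C r).pow (m + 2))
    have hnewton := hsplit.newton_top_coeffs m (legendreSeq.natDegree_multiplierOp_le γ
      (by rw [natDegree_pow, natDegree_X_sub_C, mul_one]))
    obtain ⟨h2, h1, h0⟩ := hcoeff r
    rw [h2, h1, h0, Nat.cast_choose_two] at hnewton
    push_cast at hnewton
    linear_combination hnewton
  have hpos : (0 : ℝ) < (m + 1) * (m + 2) ^ 2 := by positivity
  exact nonneg_of_mul_nonneg_right (leading_nonneg_of_forall_quadratic_nonneg hquad) hpos
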